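/- For the q-state Potts model with β, B ≥ 0, q ≥ 2 and d ≥ 4 even: if b° ∈ [0, 1] is any fixed point of the univariate map bp induced by the Bethe recursion on Δ̄, then the function b ↦ Ψ^vx(h_b, h_{b°}, …, h_{b°}) / Ψ^e(h_b, h_{b°}, …, h_{b°}) is constant for b ∈ [0, 1]. -/

import Mathlib

open Finset Filter MeasureTheory

noncomputable section

/-! ## Simplex, specifications, Bethe functional -/

/-- The simplex of probability vectors on `Fin q`. -/
def simplex (q : ℕ) : Set (Fin q → ℝ) :=
  {h | (∀ σ, 0 ≤ h σ) ∧ ∑ σ, h σ = 1}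

/-- `(ψ, ψ̄)` is a valid specification: `ψ` symmetric nonnegative, `ψ̄` positive. -/
def IsSpec {q : ℕ} (ψ : Fin q → Fin q → ℝ) (ψb : Fin q → ℝ) : Prop :=
  (∀ σ σ', ψ σ σ' = ψ σ' σ) ∧ (∀ σ σ', 0 ≤ ψ σ σ') ∧ ∀ σ, 0 < ψb σ

/-- Permissivity of the interaction `ψ`. -/
def Permissive {q : ℕ} (ψ : Fin q → Fin q → ℝ) : Prop :=
  ∃ σp, ∀ σ, 0 < ψ σ σp

/-- The belief propagation (Bethe) recursion. -/
def BPmap (q d : ℕ) (ψ : Fin q → Fin q → ℝ) (ψb : Fin q → ℝ) (h : Fin q → ℝ) :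
    Fin q → ℝ := fun σ =>
  ψb σ * (∑ σ', ψ σ σ' * h σ') ^ (d - 1) /
    ∑ τ, ψb τ * (∑ σ', ψ τ σ' * h σ') ^ (d - 1)

/-- The set `Δ*` of fixed points of the BP recursion in the simplex. -/
def bpFixedPts (q d : ℕ) (ψ : Fin q → Fin q → ℝ) (ψb : Fin q → ℝ) : Set (Fin q → ℝ) :=
  {h | h ∈ simplex q ∧ BPmap q d ψ ψb h = h}

/-- The Bethe free energy functional `Φ(h)`. -/
def PhiFun (q d : ℕ) (ψ : Fin q → Fin q → ℝ) (ψb : Fin q → ℝ) (h : Fin q → ℝ) : ℝ :=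
  Real.log (∑ σ, ψb σ * (∑ σ', ψ σ σ' * h σ') ^ d) -
    ((d : ℝ) / 2) * Real.log (∑ σ, ∑ σ', ψ σ σ' * h σ * h σ')

/-- The Bethe prediction `Φ = sup_{h ∈ Δ*} Φ(h)`. -/
def BetheP (q d : ℕ) (ψ : Fin q → Fin q → ℝ) (ψb : Fin q → ℝ) : ℝ :=
  sSup (PhiFun q d ψ ψb '' bpFixedPts q d ψ ψb)

/-! ## Edge simplex and edge Bethe functional -/

/-- Symmetric probability measures on `Fin q × Fin q`. -/
def edgeSimplex (q : ℕ) : Set (Fin q → Fin q → ℝ) :=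
  {h | (∀ σ σ', 0 ≤ h σ σ') ∧ (∀ σ σ', h σ σ' = h σ' σ) ∧ ∑ σ, ∑ σ', h σ σ' = 1}

/-- One-point marginal of an edge measure. -/
def marg (q : ℕ) (h : Fin q → Fin q → ℝ) : Fin q → ℝ := fun σ => ∑ σ', h σ σ'

/-- Shannon entropy of a measure on `Fin q`. -/
def ent1 (q : ℕ) (p : Fin q → ℝ) : ℝ := -∑ σ, p σ * Real.log (p σ)

/-- Shannon entropy of a measure on `Fin q × Fin q`. -/
def ent2 (q : ℕ) (h : Fin q → Fin q → ℝ) : ℝ := -∑ σ, ∑ σ', h σ σ' * Real.log (h σ σ')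

/-- The edge Bethe free energy functional `𝚽`. -/
def edgePhi (q d : ℕ) (ψ : Fin q → Fin q → ℝ) (ψb : Fin q → ℝ)
    (h : Fin q → Fin q → ℝ) : ℝ :=
  (∑ σ, marg q h σ * Real.log (ψb σ)) - ((d : ℝ) - 1) * ent1 q (marg q h) +
    ((d : ℝ) / 2) * ((∑ σ, ∑ σ', h σ σ' * Real.log (ψ σ σ')) + ent2 q h)

/-- The embedding `g ↦ g ⊗_ψ g` of the simplex into the edge simplex. -/
def tensorPsi (q : ℕ) (ψ : Fin q → Fin q → ℝ) (g : Fin q → ℝ) : Fin q → Fin q → ℝ :=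
  fun σ σ' => ψ σ σ' * g σ * g σ' / ∑ τ, ∑ τ', ψ τ τ' * g τ * g τ'

/-- All directional derivatives of `𝚽` within the edge simplex vanish at `h`. -/
def IsStationaryOn (q d : ℕ) (ψ : Fin q → Fin q → ℝ) (ψb : Fin q → ℝ)
    (h : Fin q → Fin q → ℝ) : Prop :=
  ∀ h' ∈ edgeSimplex q,
    deriv (fun η : ℝ =>
      edgePhi q d ψ ψb fun σ σ' => h σ σ' + η * (h' σ σ' - h σ σ')) 0 = 0

/-! ## Matchings (configuration model) -/

/-- A perfect matching of `Fin N`, encoded as a fixed-point-free involution. -/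
def IsMatching {N : ℕ} (m : Fin N → Fin N) : Prop :=
  Function.Involutive m ∧ ∀ i, m i ≠ i

instance {N : ℕ} : DecidablePred (IsMatching (N := N)) := fun m =>
  decidable_of_iff ((∀ i, m (m i) = i) ∧ ∀ i, m i ≠ i) Iff.rfl

/-- The set `M_{d,n}` of perfect matchings (here of `Fin N`). -/
abbrev Matchings (N : ℕ) := {m : Fin N → Fin N // IsMatching m}

/-- Representative modulo `n` of a half-edge label. -/
def bar (d n : ℕ) (i : Fin (d * n)) : Fin n :=
  ⟨i.1 % n, Nat.mod_lt _ (Nat.pos_of_ne_zero fun h => by subst h; simpa using i.2)⟩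

/-- Partition function of the factor model determined by a matching `γ ∈ M_{d,n}`. -/
def Zmatch (q d n : ℕ) (ψ : Fin q → Fin q → ℝ) (ψb : Fin q → ℝ)
    (γ : Matchings (d * n)) : ℝ :=
  ∑ σ : Fin n → Fin q,
    (∏ v, ψb (σ v)) *
      ∏ i ∈ univ.filter fun i => i < γ.1 i, ψ (σ (bar d n i)) (σ (bar d n (γ.1 i)))

/-- Expectation under the uniform measure on matchings (configuration model). -/
def Ecm (d n : ℕ) (f : Matchings (d * n) → ℝ) : ℝ :=
  (∑ γ : Matchings (d * n), f γ) / (Fintype.card (Matchings (d * n)) : ℝ)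

/-- The free energy `φ^cm_{d,n}` of the configuration model. -/
def phiCm (q d n : ℕ) (ψ : Fin q → Fin q → ℝ) (ψb : Fin q → ℝ) : ℝ :=
  (n : ℝ)⁻¹ * Ecm d n fun γ => Real.log (Zmatch q d n ψ ψb γ)

/-- Probability of an event under the uniform measure on matchings. -/
def Pcm (d n : ℕ) (p : Matchings (d * n) → Prop) : ℝ :=
  (Nat.card {γ : Matchings (d * n) // p γ} : ℝ) / (Fintype.card (Matchings (d * n)) : ℝ)

/-! ## Multigraphs via adjacency counts, tree-like vertices, `ζ_t` -/

/-- Degree in a multigraph given by adjacency counts (a self-loop counts twice,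
via the convention `A v v = 2 · #loops`). -/
def mgDeg {V : Type} [Fintype V] (A : V → V → ℕ) (u : V) : ℕ := ∑ w, A u w

/-- The simple graph underlying a multigraph (loops and multiplicities dropped). -/
def mgGraph {V : Type} (A : V → V → ℕ) : SimpleGraph V where
  Adj u w := u ≠ w ∧ (A u w ≠ 0 ∨ A w u ≠ 0)
  symm := ⟨fun u w h => ⟨h.1.symm, h.2.symm⟩⟩
  loopless := ⟨fun u h => h.1 rfl⟩

/-- The radius-`t` ball around `v`. -/
def mball {V : Type} [Fintype V] (A : V → V → ℕ) (v : V) (t : ℕ) : Finset V := by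
  classical exact univ.filter fun u => (mgGraph A).Reachable v u ∧ (mgGraph A).dist v u ≤ t

/-- `v` is `t`-tree-like: the radius-`t` ball around `v` is isomorphic to the depth-`t`
ball of the `d`-regular tree; concretely, every vertex at distance `< t` has degree `d`,
the ball carries no self-loops or multi-edges, and the (connected) ball has exactly
`|ball| - 1` edges, i.e. contains no cycle. -/
def treeLike (d : ℕ) {V : Type} [Fintype V] (A : V → V → ℕ) (t : ℕ) (v : V) : Prop :=
  (∀ u, (mgGraph A).Reachable v u → (mgGraph A).dist v u < t → mgDeg A u = d) ∧
  (∀ u ∈ mball A v t, A u u = 0) ∧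
  (∀ u ∈ mball A v t, ∀ w ∈ mball A v t, A u w ≤ 1) ∧
  (∑ u ∈ mball A v t, ∑ w ∈ mball A v t, A u w) = 2 * ((mball A v t).card - 1)

/-- Fraction `ζ_t` of vertices whose radius-`t` ball is not `d`-regular-tree-like. -/
def zeta (d : ℕ) {V : Type} [Fintype V] (A : V → V → ℕ) (t : ℕ) : ℝ :=
  (Nat.card {v : V // ¬ treeLike d A t v} : ℝ) / (Fintype.card V : ℝ)

/-- Adjacency counts of the multigraph `G[γ]` determined by a matching. -/
def matchAdj {d n : ℕ} (γ : Matchings (d * n)) (u w : Fin n) : ℕ :=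
  (univ.filter fun i : Fin (d * n) => bar d n i = u ∧ bar d n (γ.1 i) = w).card

/-- Adjacency counts of a simple graph. -/
def sgAdj {V : Type} [Fintype V] (G : SimpleGraph V) (u w : V) : ℕ := by
  classical exact if G.Adj u w then 1 else 0

/-! ## Partition functions of graphs and multigraphs -/

/-- The Gibbs weight of a configuration on a simple graph. -/
def graphWeight (q : ℕ) {V : Type} [Fintype V] [LinearOrder V] (ψ : Fin q → Fin q → ℝ)
    (ψb : Fin q → ℝ) (G : SimpleGraph V) (σ : V → Fin q) : ℝ := by
  classical exact
    (∏ v, ψb (σ v)) *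
      ∏ p ∈ univ.filter fun p : V × V => p.1 < p.2 ∧ G.Adj p.1 p.2, ψ (σ p.1) (σ p.2)

/-- Partition function of the factor model on a simple graph. -/
def ZG (q : ℕ) {V : Type} [Fintype V] [LinearOrder V] (ψ : Fin q → Fin q → ℝ)
    (ψb : Fin q → ℝ) (G : SimpleGraph V) : ℝ :=
  ∑ σ : V → Fin q, graphWeight q ψ ψb G σ

/-- The Gibbs weight of a configuration on a multigraph. -/
def mgWeight (q : ℕ) {V : Type} [Fintype V] [LinearOrder V] (ψ : Fin q → Fin q → ℝ)
    (ψb : Fin q → ℝ) (A : V → V → ℕ) (σ : V → Fin q) : ℝ :=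
  (∏ v, ψb (σ v)) *
    (∏ p ∈ univ.filter fun p : V × V => p.1 < p.2, ψ (σ p.1) (σ p.2) ^ A p.1 p.2) *
    ∏ v, ψ (σ v) (σ v) ^ (A v v / 2)

/-- Partition function of the factor model on a multigraph. -/
def Zmg (q : ℕ) {V : Type} [Fintype V] [LinearOrder V] (ψ : Fin q → Fin q → ℝ)
    (ψb : Fin q → ℝ) (A : V → V → ℕ) : ℝ :=
  ∑ σ : V → Fin q, mgWeight q ψ ψb A σ

/-- Remove a vertex from a multigraph (delete all incident edges). -/
def removeVx {V : Type} [DecidableEq V] (A : V → V → ℕ) (v : V) : V → V → ℕ :=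
  fun i j => if i = v ∨ j = v then 0 else A i j

/-- Law of the spins of the (enumerated) neighbors of `v` under the factor model
on the multigraph with `v` removed. -/
def nuMinus (q d N : ℕ) (ψ : Fin q → Fin q → ℝ) (ψb : Fin q → ℝ)
    (A : Fin N → Fin N → ℕ) (v : Fin N) (vs : Fin d → Fin N) (τ : Fin d → Fin q) : ℝ :=
  (∑ᶠ (σ : Fin N → Fin q) (_ : ∀ j, σ (vs j) = τ j), mgWeight q ψ ψb (removeVx A v) σ) /
    Zmg q ψ ψb (removeVx A v)

/-- Total variation distance of probability vectors. -/
def dTV {α : Type} [Fintype α] (p r : α → ℝ) : ℝ := (∑ x, |p x - r x|) / 2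

/-- The mixture `ρ̄` of product measures associated to a measure `ρ` on `Δ^d`. -/
def rhoBar (q d : ℕ) (ρ : Measure (Fin d → Fin q → ℝ)) (τ : Fin d → Fin q) : ℝ :=
  ∫ h, (∏ j, h j (τ j)) ∂ρ

/-- `x` lies in the (topological) support of the measure `ρ`. -/
def inSupp {α : Type*} [TopologicalSpace α] {m : MeasurableSpace α}
    (ρ : Measure α) (x : α) : Prop :=
  ∀ U : Set α, IsOpen U → x ∈ U → 0 < ρ U

/-- Symmetric multigraph adjacency data with an even number of half-loops. -/
def IsMultigraphAdj {V : Type} (A : V → V → ℕ) : Prop :=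
  (∀ u w, A u w = A w u) ∧ ∀ v, Even (A v v)

/-- `d`-regularity of a multigraph. -/
def IsRegAdj (d : ℕ) {V : Type} [Fintype V] (A : V → V → ℕ) : Prop :=
  ∀ v, mgDeg A v = d

/-! ## The functionals `Ψ^vx`, `Ψ^e`, `Ψ^{e,sym}`, `Ψ^sym` -/

def PsiVx (q d : ℕ) (ψ : Fin q → Fin q → ℝ) (ψb : Fin q → ℝ)
    (h : Fin d → Fin q → ℝ) : ℝ :=
  ∑ σ, ψb σ * ∏ j, ∑ σ', ψ σ σ' * h j σ'

def PsiE (q d : ℕ) (ψ : Fin q → Fin q → ℝ) (h : Fin d → Fin q → ℝ) : ℝ :=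
  ∏ j : Fin (d / 2),
    ∑ σ, ∑ σ', ψ σ σ' * h ⟨2 * j.1, by have := j.2; omega⟩ σ *
      h ⟨2 * j.1 + 1, by have := j.2; omega⟩ σ'

def PsiEsym (q d : ℕ) (ψ : Fin q → Fin q → ℝ) (h : Fin d → Fin q → ℝ) : ℝ :=
  (∑ π : Equiv.Perm (Fin d), PsiE q d ψ fun j => h (π j)) / (Nat.factorial d : ℝ)

def PsiSym (q d : ℕ) (ψ : Fin q → Fin q → ℝ) (ψb : Fin q → ℝ)
    (h : Fin d → Fin q → ℝ) : ℝ :=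
  PsiVx q d ψ ψb h / PsiEsym q d ψ h

/-! ## Potts model -/

/-- Potts pair interaction. -/
def pottsPsi (q : ℕ) (β : ℝ) : Fin q → Fin q → ℝ :=
  fun σ σ' => Real.exp (if σ = σ' then β else 0)

/-- Potts magnetic field (favoring the spin with index `0`). -/
def pottsPsib (q : ℕ) (B : ℝ) : Fin q → ℝ :=
  fun σ => Real.exp (if σ.1 = 0 then B else 0)

/-- The one-parameter family `h_b ∈ Δ̄` of biased measures. -/
def pottsHb (q : ℕ) (b : ℝ) : Fin q → ℝ :=
  fun σ => if σ.1 = 0 then (1 + ((q : ℝ) - 1) * b) / q else (1 - b) / q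

/-- The univariate Bethe recursion `bp` on the bias parameter `b`. -/
def pottsBp (q d : ℕ) (β B : ℝ) (b : ℝ) : ℝ :=
  ((q : ℝ) * (∑ σ ∈ univ.filter fun σ : Fin q => σ.1 = 0,
      BPmap q d (pottsPsi q β) (pottsPsib q B) (pottsHb q b) σ) - 1) / ((q : ℝ) - 1)

/-- `b_f`, the limit of the (monotone) BP iterates started from `b = 0`. -/
def bLo (q d : ℕ) (β B : ℝ) : ℝ := ⨆ t : ℕ, (pottsBp q d β B)^[t] 0

/-- `b_m`, the limit of the (monotone) BP iterates started from `b = 1`. -/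
def bHi (q d : ℕ) (β B : ℝ) : ℝ := ⨅ t : ℕ, (pottsBp q d β B)^[t] 1

/-- The function `F(x) = x⁻¹ (x/θ + 1)^{d-1}`. -/
def Fpotts (d : ℕ) (θ x : ℝ) : ℝ := x⁻¹ * (x / θ + 1) ^ (d - 1)

/-! ## Exchangeable pairs and the symmetric correlation coefficient -/

def eMean (q : ℕ) (h φ : Fin q → Fin q → ℝ) : ℝ := ∑ σ, ∑ σ', h σ σ' * φ σ σ'

def eVar (q : ℕ) (h φ : Fin q → Fin q → ℝ) : ℝ :=
  ∑ σ, ∑ σ', h σ σ' * (φ σ σ' - eMean q h φ) ^ 2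

def eCondVar (q : ℕ) (h φ : Fin q → Fin q → ℝ) : ℝ :=
  ∑ σ, marg q h σ * ((∑ σ', h σ σ' * φ σ σ') / marg q h σ - eMean q h φ) ^ 2

/-- The symmetric correlation coefficient `ρ_XY` of an exchangeable pair with law `h`. -/
def rhoXY (q : ℕ) (h : Fin q → Fin q → ℝ) : ℝ :=
  sSup {r | ∃ φ : Fin q → Fin q → ℝ, (∀ σ σ', φ σ σ' = φ σ' σ) ∧ 0 < eVar q h φ ∧
    r = eCondVar q h φ / eVar q h φ}

/-! ## Empirical measures, misc -/

/-- The edge empirical measure `L^e(σ, γ)`. -/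
def edgeEmp (q d n : ℕ) (γ : Matchings (d * n)) (σ : Fin n → Fin q) :
    Fin q → Fin q → ℝ :=
  fun τ τ' =>
    ((univ.filter fun i : Fin (d * n) =>
        σ (bar d n i) = τ ∧ σ (bar d n (γ.1 i)) = τ').card : ℝ) / ((n : ℝ) * d)

/-- The vertex empirical (spin) distribution `L^vx(σ)`. -/
def empDist (q n : ℕ) (σ : Fin n → Fin q) : Fin q → ℝ :=
  fun τ => (Nat.card {i : Fin n // σ i = τ} : ℝ) / n

/-- Probability of an event under a weight function. -/
def probOf {α : Type*} (P : α → ℝ) (p : α → Prop) : ℝ := ∑ᶠ (x : α) (_ : p x), P x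

/-- Probability of an event under the uniform measure on simple `d`-regular graphs. -/
def Preg (d n : ℕ) (p : SimpleGraph (Fin n) → Prop) : ℝ :=
  (Nat.card {G : SimpleGraph (Fin n) // (∀ v, mgDeg (sgAdj G) v = d) ∧ p G} : ℝ) /
    (Nat.card {G : SimpleGraph (Fin n) // ∀ v, mgDeg (sgAdj G) v = d} : ℝ)

/-- Adjoin to `G` one new vertex, adjacent to the vertices of `S`. -/
def addVertex (k : ℕ) (G : SimpleGraph (Fin k)) (S : Finset (Fin k)) :
    SimpleGraph (Fin (k + 1)) :=
  SimpleGraph.fromRel fun a b =>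
    (∃ u w : Fin k, a = u.castSucc ∧ b = w.castSucc ∧ G.Adj u w) ∨
      (a = Fin.last k ∧ ∃ w ∈ S, b = w.castSucc)

/-- Strict local maximizer of the edge Bethe functional on the edge simplex. -/
def strictLocalMaxOnEdge (q d : ℕ) (ψ : Fin q → Fin q → ℝ) (ψb : Fin q → ℝ)
    (H : Fin q → Fin q → ℝ) : Prop :=
  ∃ ε : ℝ, 0 < ε ∧ ∀ h' ∈ edgeSimplex q, h' ≠ H → dist h' H < ε →
    edgePhi q d ψ ψb h' < edgePhi q d ψ ψb H

/-- Strictly negative second variation of the edge Bethe functional at `H`, in every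
nonzero symmetric direction of total mass zero. -/
def negSecondVar (q d : ℕ) (ψ : Fin q → Fin q → ℝ) (ψb : Fin q → ℝ)
    (H : Fin q → Fin q → ℝ) : Prop :=
  ∀ δ : Fin q → Fin q → ℝ, δ ≠ 0 → (∀ σ σ', δ σ σ' = δ σ' σ) →
    (∑ σ, ∑ σ', δ σ σ') = 0 →
    iteratedDeriv 2 (fun η : ℝ => edgePhi q d ψ ψb fun σ σ' => H σ σ' + η * δ σ σ') 0 < 0

/-!
For a symmetric `ψ` and a BP fixed point `h°` with normaliser `Z`, the fixed-point equation
`ψ̄ · (ψ h°)^(d-1) = Z · h°` collapses the vertex functional to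
`Ψ^vx(h, h°, …, h°) = Z · ⟨h°, ψ h⟩`, while the edge functional factors as
`Ψ^e(h, h°, …, h°) = ⟨h, ψ h°⟩ · ⟨h°, ψ h°⟩^(d/2 - 1)`. The pairing `⟨h, ψ h°⟩` is positive and
cancels, leaving a ratio independent of `h`. For Potts, a fixed point `b°` of `bp` gives the BP
fixed point `h_{b°}`, because BP maps `h_b` to `h_{bp b}`: it preserves probability vectors that
are constant off the spin `0`.
-/

def psiPair {q : ℕ} (ψ : Fin q → Fin q → ℝ) (g h : Fin q → ℝ) : ℝ :=
  ∑ σ, ∑ σ', ψ σ σ' * g σ * h σ'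

def bpNorm (q d : ℕ) (ψ : Fin q → Fin q → ℝ) (ψb : Fin q → ℝ) (h : Fin q → ℝ) : ℝ :=
  ∑ τ, ψb τ * (∑ σ', ψ τ σ' * h σ') ^ (d - 1)

lemma Fintype.prod_ite_eq_mul_pow {ι M : Type*} [Fintype ι] [DecidableEq ι] [CommMonoid M]
    (i : ι) (x y : M) :
    ∏ j, (if j = i then x else y) = x * y ^ (Fintype.card ι - 1) := by
  rw [Fintype.prod_eq_mul_prod_compl i, if_pos rfl,
    Finset.prod_congr rfl fun j hj => if_neg (Finset.mem_compl.mp hj ∘ Finset.mem_singleton.mpr),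
    Finset.prod_const, Finset.card_compl, Finset.card_singleton]

section Simplex

variable {q : ℕ} {g h : Fin q → ℝ}

lemma exists_pos_of_mem_simplex (hh : h ∈ simplex q) : ∃ σ, 0 < h σ := by
  obtain ⟨σ, -, hσ⟩ := Finset.exists_lt_of_sum_lt (s := univ) (f := 0) (g := h)
    (by simp [hh.2])
  exact ⟨σ, hσ⟩

lemma sum_mul_pos_of_mem_simplex {w : Fin q → ℝ} (hw : ∀ σ, 0 < w σ) (hh : h ∈ simplex q) :
    0 < ∑ σ, w σ * h σ := by
  obtain ⟨σ, hσ⟩ := exists_pos_of_mem_simplex hh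
  exact Finset.sum_pos' (fun τ _ => mul_nonneg (hw τ).le (hh.1 τ))
    ⟨σ, mem_univ σ, mul_pos (hw σ) hσ⟩

lemma psiPair_pos {ψ : Fin q → Fin q → ℝ} (hψ : ∀ σ σ', 0 < ψ σ σ')
    (hg : g ∈ simplex q) (hh : h ∈ simplex q) : 0 < psiPair ψ g h := by
  have hsplit : psiPair ψ g h = ∑ σ, (∑ σ', ψ σ σ' * h σ') * g σ := by
    simp only [psiPair, Finset.sum_mul]
    exact Finset.sum_congr rfl fun σ _ => Finset.sum_congr rfl fun σ' _ => by ring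
  rw [hsplit]
  exact sum_mul_pos_of_mem_simplex (fun σ => sum_mul_pos_of_mem_simplex (hψ σ) hh) hg

lemma psiPair_comm {ψ : Fin q → Fin q → ℝ} (hψ : ∀ σ σ', ψ σ σ' = ψ σ' σ) :
    psiPair ψ g h = psiPair ψ h g := by
  rw [psiPair, Finset.sum_comm]
  exact Finset.sum_congr rfl fun σ _ => Finset.sum_congr rfl fun σ' _ => by rw [hψ]; ring

end Simplex

section BetheRecursion

variable {q d : ℕ} {ψ : Fin q → Fin q → ℝ} {ψb : Fin q → ℝ} {h : Fin q → ℝ}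

lemma bpNorm_pos (hψ : ∀ σ σ', 0 < ψ σ σ') (hψb : ∀ σ, 0 < ψb σ) (hh : h ∈ simplex q) :
    0 < bpNorm q d ψ ψb h := by
  obtain ⟨σ, -⟩ := exists_pos_of_mem_simplex hh
  exact Finset.sum_pos
    (fun τ _ => mul_pos (hψb τ) (pow_pos (sum_mul_pos_of_mem_simplex (hψ τ) hh) _))
    ⟨σ, mem_univ σ⟩

lemma BPmap_apply (σ : Fin q) :
    BPmap q d ψ ψb h σ = ψb σ * (∑ σ', ψ σ σ' * h σ') ^ (d - 1) / bpNorm q d ψ ψb h :=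
  rfl

lemma sum_BPmap (hZ : bpNorm q d ψ ψb h ≠ 0) : ∑ σ, BPmap q d ψ ψb h σ = 1 := by
  simp only [BPmap_apply, ← Finset.sum_div]
  exact div_self hZ

lemma mul_pow_eq_bpNorm_mul (hh : h ∈ bpFixedPts q d ψ ψb) (σ : Fin q) :
    ψb σ * (∑ σ', ψ σ σ' * h σ') ^ (d - 1) = bpNorm q d ψ ψb h * h σ := by
  obtain ⟨hsimp, hfix⟩ := hh
  have hZ : bpNorm q d ψ ψb h ≠ 0 := by
    intro hZ
    have h0 : h = 0 := by
      rw [← hfix]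
      funext τ
      rw [BPmap_apply, hZ, div_zero, Pi.zero_apply]
    simpa [h0] using hsimp.2
  rw [← congrFun hfix σ, BPmap_apply, mul_div_cancel₀ _ hZ]

lemma PsiVx_ite_of_mem_bpFixedPts (hψ : ∀ σ σ', ψ σ σ' = ψ σ' σ) {h₀ : Fin q → ℝ}
    (h₀fix : h₀ ∈ bpFixedPts q d ψ ψb) (i : Fin d) :
    PsiVx q d ψ ψb (fun j => if j = i then h else h₀) = bpNorm q d ψ ψb h₀ * psiPair ψ h h₀ := by
  calc PsiVx q d ψ ψb (fun j => if j = i then h else h₀)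
      = ∑ σ, (ψb σ * (∑ σ', ψ σ σ' * h₀ σ') ^ (d - 1)) * ∑ σ', ψ σ σ' * h σ' := by
        refine Finset.sum_congr rfl fun σ _ => ?_
        rw [Finset.prod_congr rfl fun j _ =>
            apply_ite (fun f : Fin q → ℝ => ∑ σ', ψ σ σ' * f σ') _ _ _,
          Fintype.prod_ite_eq_mul_pow, Fintype.card_fin]
        ring
    _ = bpNorm q d ψ ψb h₀ * psiPair ψ h₀ h := by
        simp only [mul_pow_eq_bpNorm_mul h₀fix, psiPair, Finset.mul_sum]
        exact Finset.sum_congr rfl fun σ _ => Finset.sum_congr rfl fun σ' _ => by ring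
    _ = bpNorm q d ψ ψb h₀ * psiPair ψ h h₀ := by rw [psiPair_comm hψ]

end BetheRecursion

lemma PsiE_ite {q d : ℕ} (hd : 2 ≤ d) (ψ : Fin q → Fin q → ℝ) (g h : Fin q → ℝ) :
    PsiE q d ψ (fun j => if j = ⟨0, by omega⟩ then g else h) =
      psiPair ψ g h * psiPair ψ h h ^ (d / 2 - 1) := by
  have hprod := Fintype.prod_ite_eq_mul_pow (⟨0, by omega⟩ : Fin (d / 2))
    (psiPair ψ g h) (psiPair ψ h h)
  rw [Fintype.card_fin] at hprod
  rw [PsiE, ← hprod]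
  refine Finset.prod_congr rfl fun j _ => ?_
  by_cases hj : j.1 = 0 <;> simp [psiPair, Fin.ext_iff, hj]

section Potts

variable {q : ℕ}

lemma pottsPsi_pos (β : ℝ) (σ σ' : Fin q) : 0 < pottsPsi q β σ σ' := Real.exp_pos _

lemma pottsPsi_symm (β : ℝ) (σ σ' : Fin q) : pottsPsi q β σ σ' = pottsPsi q β σ' σ := by
  simp only [pottsPsi, eq_comm]

lemma pottsPsib_pos (B : ℝ) (σ : Fin q) : 0 < pottsPsib q B σ := Real.exp_pos _

lemma sum_pottsPsi_mul (β : ℝ) (h : Fin q → ℝ) (σ : Fin q) :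
    ∑ σ', pottsPsi q β σ σ' * h σ' = ∑ σ', h σ' + (Real.exp β - 1) * h σ := by
  have hterm : ∀ σ', pottsPsi q β σ σ' * h σ' =
      h σ' + if σ = σ' then (Real.exp β - 1) * h σ' else 0 := by
    intro σ'
    by_cases hσ : σ = σ'
    · rw [pottsPsi, if_pos hσ, if_pos hσ]
      ring
    · rw [pottsPsi, if_neg hσ, if_neg hσ, Real.exp_zero, one_mul, add_zero]
  rw [Finset.sum_congr rfl fun σ' _ => hterm σ', Finset.sum_add_distrib, Finset.sum_ite_eq,
    if_pos (mem_univ σ)]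

lemma sum_ite_val_eq_zero (hq : 0 < q) (a c : ℝ) :
    ∑ σ : Fin q, (if σ.1 = 0 then a else c) = a + ((q : ℝ) - 1) * c := by
  rw [Fintype.sum_eq_add_sum_compl ⟨0, hq⟩, if_pos rfl,
    Finset.sum_congr rfl fun σ hσ => if_neg fun h0 => Finset.mem_compl.mp hσ
      (Finset.mem_singleton.mpr (Fin.ext h0)),
    Finset.sum_const, Finset.card_compl, Finset.card_singleton, Fintype.card_fin, nsmul_eq_mul,
    Nat.cast_sub (by omega), Nat.cast_one]

lemma pottsHb_mem_simplex (hq : 0 < q) {b : ℝ} (hb : b ∈ Set.Icc (0 : ℝ) 1) :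
    pottsHb q b ∈ simplex q := by
  have hQ : (1 : ℝ) ≤ q := by exact_mod_cast hq
  refine ⟨fun σ => ?_, ?_⟩
  · unfold pottsHb
    split_ifs
    · exact div_nonneg (by nlinarith [hb.1]) (by linarith)
    · exact div_nonneg (by linarith [hb.2]) (by linarith)
  · simp only [pottsHb]
    rw [sum_ite_val_eq_zero hq]
    field_simp
    ring

lemma eq_pottsHb (hq : 2 ≤ q) (f : Fin q → ℝ)
    (hf : ∀ σ τ : Fin q, σ.1 ≠ 0 → τ.1 ≠ 0 → f σ = f τ) (hsum : ∑ σ, f σ = 1) :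
    f = pottsHb q (((q : ℝ) * f ⟨0, by omega⟩ - 1) / ((q : ℝ) - 1)) := by
  have hQ : (2 : ℝ) ≤ q := by exact_mod_cast hq
  have hq1 : (q : ℝ) - 1 ≠ 0 := by linarith
  have hite : f = fun σ => if σ.1 = 0 then f ⟨0, by omega⟩ else f ⟨1, by omega⟩ := by
    funext σ
    split_ifs with hσ
    · exact congrArg f (Fin.ext hσ)
    · exact hf σ ⟨1, by omega⟩ hσ one_ne_zero
  rw [hite, sum_ite_val_eq_zero (by omega)] at hsum
  rw [hite]
  funext σ
  simp only [pottsHb]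
  split_ifs
  · field_simp
    ring
  · field_simp
    linear_combination (q : ℝ) * hsum

end Potts

lemma BPmap_pottsHb (q d : ℕ) (hq : 2 ≤ q) (β B : ℝ) {b : ℝ} (hb : b ∈ Set.Icc (0 : ℝ) 1) :
    BPmap q d (pottsPsi q β) (pottsPsib q B) (pottsHb q b) = pottsHb q (pottsBp q d β B b) := by
  set f := BPmap q d (pottsPsi q β) (pottsPsib q B) (pottsHb q b)
  have hsym : ∀ σ τ : Fin q, σ.1 ≠ 0 → τ.1 ≠ 0 → f σ = f τ := by
    intro σ τ hσ hτ
    simp only [f, BPmap_apply, sum_pottsPsi_mul, pottsPsib, pottsHb, hσ, hτ, if_false]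
  have hsum : ∑ σ, f σ = 1 := sum_BPmap (bpNorm_pos (pottsPsi_pos β) (pottsPsib_pos B)
    (pottsHb_mem_simplex (by omega) hb)).ne'
  rw [eq_pottsHb hq f hsym hsum, pottsBp]
  congr 3
  rw [Finset.sum_eq_single_of_mem ⟨0, by omega⟩ (by simp)]
  intro σ hσ hne
  exact absurd (Fin.ext (Finset.mem_filter.mp hσ).2) hne

lemma pottsHb_mem_bpFixedPts (q d : ℕ) (hq : 2 ≤ q) (β B : ℝ) {b : ℝ}
    (hb : b ∈ Set.Icc (0 : ℝ) 1) (hfix : pottsBp q d β B b = b) :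
    pottsHb q b ∈ bpFixedPts q d (pottsPsi q β) (pottsPsib q B) :=
  ⟨pottsHb_mem_simplex (by omega) hb, by rw [BPmap_pottsHb q d hq β B hb, hfix]⟩

lemma PsiVx_div_PsiE_ite_of_mem_bpFixedPts {q d : ℕ} (hd : 2 ≤ d) {ψ : Fin q → Fin q → ℝ}
    {ψb : Fin q → ℝ} (hψ : ∀ σ σ', ψ σ σ' = ψ σ' σ) {h₀ h : Fin q → ℝ}
    (h₀fix : h₀ ∈ bpFixedPts q d ψ ψb) (hpair : psiPair ψ h h₀ ≠ 0) :
    PsiVx q d ψ ψb (fun j => if j = ⟨0, by omega⟩ then h else h₀) /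
        PsiE q d ψ (fun j => if j = ⟨0, by omega⟩ then h else h₀) =
      bpNorm q d ψ ψb h₀ / psiPair ψ h₀ h₀ ^ (d / 2 - 1) := by
  rw [PsiVx_ite_of_mem_bpFixedPts hψ h₀fix, PsiE_ite hd, mul_comm (psiPair ψ h h₀),
    mul_div_mul_right _ _ hpair]

/-- if `b°` is a fixed point of the univariate Potts BP map, then
`b ↦ Ψ^vx(h_b, h_{b°}, …, h_{b°}) / Ψ^e(h_b, h_{b°}, …, h_{b°})` is constant on `[0,1]`. -/
theorem potts_psi_ratio_constant
    (q d : ℕ) (hq : 2 ≤ q) (hd : 4 ≤ d)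
    (β B : ℝ)
    (b0 : ℝ) (hb0 : b0 ∈ Set.Icc (0 : ℝ) 1) (hfix : pottsBp q d β B b0 = b0) :
    ∀ b1 ∈ Set.Icc (0 : ℝ) 1, ∀ b2 ∈ Set.Icc (0 : ℝ) 1,
      PsiVx q d (pottsPsi q β) (pottsPsib q B)
          (fun j : Fin d => if j = ⟨0, by omega⟩ then pottsHb q b1 else pottsHb q b0) /
        PsiE q d (pottsPsi q β)
          (fun j : Fin d => if j = ⟨0, by omega⟩ then pottsHb q b1 else pottsHb q b0) =
      PsiVx q d (pottsPsi q β) (pottsPsib q B)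
          (fun j : Fin d => if j = ⟨0, by omega⟩ then pottsHb q b2 else pottsHb q b0) /
        PsiE q d (pottsPsi q β)
          (fun j : Fin d => if j = ⟨0, by omega⟩ then pottsHb q b2 else pottsHb q b0) := by
  intro b1 hb1 b2 hb2
  have h₀fix := pottsHb_mem_bpFixedPts q d hq β B hb0 hfix
  have hpair : ∀ b ∈ Set.Icc (0 : ℝ) 1, psiPair (pottsPsi q β) (pottsHb q b) (pottsHb q b0) ≠ 0 :=
    fun b hb => (psiPair_pos (pottsPsi_pos β) (pottsHb_mem_simplex (by omega) hb)
      (pottsHb_mem_simplex (by omega) hb0)).ne'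
  rw [PsiVx_div_PsiE_ite_of_mem_bpFixedPts (by omega) (pottsPsi_symm β) h₀fix (hpair b1 hb1),
    PsiVx_div_PsiE_ite_of_mem_bpFixedPts (by omega) (pottsPsi_symm β) h₀fix (hpair b2 hb2)]

end
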